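/- There is no Borel Hamel basis for ℝ as a vector space over ℚ; more generally, any analytic ℚ-linearly independent spanning subset of ℝ must be countable, which is impossible, so ℝ has no analytic Hamel basis over ℚ. -/

import Mathlib

/-!
Fix `b ∈ B` and let `p` be the `ℚ`-span of `B \ {b}`. Then `p` is analytic, `b ∉ p`, and the countably
many translates `q • b + p`, `q : ℚ`, cover `ℝ`, so `p` has positive outer measure. Analytic sets
are capacitable: writing a bounded piece of `p` as `F '' (ℕ → ℕ)` and shrinking the domain one
coordinate at a time without losing more than a fixed amount of measure, the intersection of the
closures of the images is a compact subset of `p` of positive measure. By Steinhaus `p - p = p` is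
a neighbourhood of `0`, hence an open subgroup of the connected group `ℝ`, so `p = ℝ ∋ b`.
-/

open MeasureTheory Set Filter Topology Pointwise

namespace MeasureTheory

variable {α : Type*} [TopologicalSpace α]

theorem AnalyticSet.inter_isOpen {s u : Set α} (hs : AnalyticSet s) (hu : IsOpen u) :
    AnalyticSet (s ∩ u) := by
  obtain ⟨β, _, _, f, hf, rfl⟩ := analyticSet_iff_exists_polishSpace_range.1 hs
  rw [← image_preimage_eq_range_inter]
  exact (hu.preimage hf).analyticSet_image hf

theorem AnalyticSet.exists_continuous_range_eq {s : Set α} (hs : AnalyticSet s)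
    (hne : s.Nonempty) : ∃ F : (ℕ → ℕ) → α, Continuous F ∧ range F = s := by
  rw [AnalyticSet] at hs
  exact hs.resolve_left hne.ne_empty

theorem AnalyticSet.span {R M : Type*} [Semiring R] [Countable R] [AddCommMonoid M] [Module R M]
    [TopologicalSpace M] [ContinuousAdd M] [ContinuousConstSMul R M] {s : Set M}
    (hs : AnalyticSet s) : AnalyticSet (Submodule.span R s : Set M) := by
  obtain ⟨β, _, _, f, hf, rfl⟩ := analyticSet_iff_exists_polishSpace_range.1 hs
  have hspan : (Submodule.span R (range f) : Set M) =
      ⋃ (n : ℕ) (c : Fin n → R), range fun x : Fin n → β => ∑ i, c i • f (x i) := by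
    ext y
    simp only [mem_iUnion, SetLike.mem_coe, Submodule.mem_span_set', mem_range]
    constructor
    · rintro ⟨n, c, g, rfl⟩
      choose x hx using fun i => (g i).2
      exact ⟨n, c, x, by simp only [hx]⟩
    · rintro ⟨n, c, x, rfl⟩
      exact ⟨n, c, fun i => ⟨f (x i), mem_range_self _⟩, rfl⟩
  rw [hspan]
  exact .iUnion fun n => .iUnion fun c => analyticSet_range_of_polishSpace (by fun_prop)

end MeasureTheory

theorem Submodule.iUnion_smul_vadd_eq_univ {R M : Type*} [Semiring R] [AddCommMonoid M]
    [Module R M] {x : M} {p : Submodule R M} (h : span R {x} ⊔ p = ⊤) :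
    ⋃ r : R, r • x +ᵥ (p : Set M) = univ := by
  refine eq_univ_of_forall fun y => ?_
  obtain ⟨_, hz, w, hw, rfl⟩ := mem_sup.1 (h ▸ mem_top : y ∈ span R {x} ⊔ p)
  obtain ⟨r, rfl⟩ := mem_span_singleton.1 hz
  exact mem_iUnion.2 ⟨r, vadd_mem_vadd_set hw⟩

theorem MeasureTheory.measure_pos_of_iUnion_vadd_eq_univ {G ι : Type*} [AddGroup G]
    [MeasurableSpace G] [MeasurableAdd G] (μ : Measure G) [μ.IsAddLeftInvariant] [NeZero μ]
    [Countable ι] (x : ι → G) {s : Set G} (h : ⋃ i, x i +ᵥ s = univ) : 0 < μ s := by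
  refine pos_iff_ne_zero.2 fun hs => NeZero.ne μ (Measure.measure_univ_eq_zero.1 ?_)
  rw [← h]
  exact measure_iUnion_null fun i => by rwa [measure_vadd]

def prefixLE (σ : ℕ → ℕ) (k : ℕ) : Set (ℕ → ℕ) := {x | ∀ i < k, x i ≤ σ i}

theorem prefixLE_zero (σ : ℕ → ℕ) : prefixLE σ 0 = univ := by
  simp [prefixLE]

theorem prefixLE_antitone (σ : ℕ → ℕ) : Antitone (prefixLE σ) :=
  fun _ _ hkl _ hx i hi => hx i (hi.trans_le hkl)

theorem prefixLE_congr {σ τ : ℕ → ℕ} {k : ℕ} (h : ∀ i < k, σ i = τ i) :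
    prefixLE σ k = prefixLE τ k := by
  ext x
  exact forall₂_congr fun i hi => by rw [h i hi]

theorem prefixLE_update_succ (σ : ℕ → ℕ) (k m : ℕ) :
    prefixLE (Function.update σ k m) (k + 1) = prefixLE σ k ∩ {x | x k ≤ m} := by
  ext x
  simp only [prefixLE, mem_inter_iff, mem_ofPred_eq, Nat.forall_lt_succ_right,
    Function.update_self]
  exact and_congr_left' <| forall₂_congr fun i hi => by rw [Function.update_of_ne hi.ne]

section Scheme

variable {X : Type*} [MeasurableSpace X] {μ : Measure X} {F : (ℕ → ℕ) → X} {c : ENNReal}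

theorem exists_lt_measure_image_prefixLE_update {σ : ℕ → ℕ} {k : ℕ}
    (h : c < μ (F '' prefixLE σ k)) :
    ∃ m, c < μ (F '' prefixLE (Function.update σ k m) (k + 1)) := by
  have hunion : ⋃ m, F '' (prefixLE σ k ∩ {x | x k ≤ m}) = F '' prefixLE σ k := by
    rw [← image_iUnion, ← inter_iUnion,
      iUnion_eq_univ_iff.2 fun x => ⟨x k, show x k ≤ x k from le_rfl⟩, inter_univ]
  have hmono : Monotone fun m => F '' (prefixLE σ k ∩ {x | x k ≤ m}) :=
    fun _ _ hmn => image_mono <| inter_subset_inter_right _ fun _ hx => hx.trans hmn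
  rw [← hunion, hmono.measure_iUnion, lt_iSup_iff] at h
  simpa only [prefixLE_update_succ] using h

theorem exists_forall_lt_measure_image_prefixLE (h : c < μ (range F)) :
    ∃ σ : ℕ → ℕ, ∀ k, c < μ (F '' prefixLE σ k) := by
  choose! next hnext using fun σ k (h : c < μ (F '' prefixLE σ k)) =>
    exists_lt_measure_image_prefixLE_update h
  let τ : ℕ → ℕ → ℕ := fun k => Nat.rec 0 (fun k σ => Function.update σ k (next σ k)) k
  have hτ : ∀ k, c < μ (F '' prefixLE (τ k) k) := by
    intro k
    induction k with
    | zero => rwa [prefixLE_zero, image_univ]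
    | succ k ih => exact hnext _ _ ih
  have hstable : ∀ k, ∀ i < k, τ (i + 1) i = τ k i := by
    intro k
    induction k with
    | zero => exact fun i hi => absurd hi (Nat.not_lt_zero i)
    | succ k ih =>
      intro i hi
      rcases Nat.lt_succ_iff_lt_or_eq.1 hi with hik | rfl
      · exact (ih i hik).trans (Function.update_of_ne hik.ne _ _).symm
      · rfl
  exact ⟨fun i => τ (i + 1) i, fun k => prefixLE_congr (hstable k) ▸ hτ k⟩

end Scheme

theorem exists_tendsto_subseq_of_mem_prefixLE {σ : ℕ → ℕ} {x : ℕ → ℕ → ℕ}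
    (hx : ∀ k, x k ∈ prefixLE σ k) :
    ∃ a, ∃ φ : ℕ → ℕ, StrictMono φ ∧ Tendsto (x ∘ φ) atTop (𝓝 a) := by
  -- truncating `x k` at `σ` lands in a compact box and changes only coordinates `≥ k`
  let y : ℕ → ℕ → ℕ := fun k i => min (x k i) (σ i)
  have hbox : IsCompact (univ.pi fun i => Iic (σ i)) :=
    isCompact_univ_pi fun i => (finite_Iic _).isCompact
  obtain ⟨a, -, φ, hφ, hy⟩ :=
    hbox.tendsto_subseq (x := y) fun k i _ => mem_Iic.2 (min_le_right _ _)
  refine ⟨a, φ, hφ, tendsto_pi_nhds.2 fun i => ?_⟩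
  have hyi := tendsto_pi_nhds.1 hy i
  rw [nhds_discrete, tendsto_pure] at hyi ⊢
  filter_upwards [hyi, hφ.tendsto_atTop.eventually_gt_atTop i] with k hk hik
  rw [← hk]
  exact (min_eq_left (hx (φ k) i hik)).symm

section Metric

variable {X : Type*} [MetricSpace X] {F : (ℕ → ℕ) → X}

theorem iInter_closure_image_prefixLE_subset_range (hF : Continuous F) (σ : ℕ → ℕ) :
    ⋂ k, closure (F '' prefixLE σ k) ⊆ range F := by
  intro y hy
  have hclose : ∀ k : ℕ, ∃ x ∈ prefixLE σ k, dist (F x) y < 1 / (k + 1) := fun k => by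
    obtain ⟨_, ⟨x, hx, rfl⟩, hxy⟩ :=
      Metric.mem_closure_iff.1 (mem_iInter.1 hy k) _ Nat.one_div_pos_of_nat
    exact ⟨x, hx, by rwa [dist_comm]⟩
  choose x hx hxy using hclose
  obtain ⟨a, φ, hφ, ha⟩ := exists_tendsto_subseq_of_mem_prefixLE hx
  have hFx : Tendsto (F ∘ x) atTop (𝓝 y) :=
    tendsto_iff_dist_tendsto_zero.2 <| squeeze_zero (fun _ => dist_nonneg)
      (fun k => (hxy k).le) tendsto_one_div_add_atTop_nhds_zero_nat
  exact ⟨a, tendsto_nhds_unique ((hF.tendsto a).comp ha) (hFx.comp hφ.tendsto_atTop)⟩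

theorem exists_isClosed_subset_range_le_measure [MeasurableSpace X] [OpensMeasurableSpace X]
    {μ : Measure X} {c : ENNReal} (hF : Continuous F) (hfin : μ (closure (range F)) ≠ ⊤)
    (hc : c < μ (range F)) : ∃ K, IsClosed K ∧ K ⊆ range F ∧ c ≤ μ K := by
  obtain ⟨σ, hσ⟩ := exists_forall_lt_measure_image_prefixLE hc
  refine ⟨_, isClosed_iInter fun k => isClosed_closure,
    iInter_closure_image_prefixLE_subset_range hF σ, ?_⟩
  have hanti : Antitone fun k => closure (F '' prefixLE σ k) :=
    fun _ _ hkl => closure_mono (image_mono (prefixLE_antitone σ hkl))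
  rw [hanti.measure_iInter (fun _ => isClosed_closure.nullMeasurableSet)
    ⟨0, ne_top_of_le_ne_top hfin (measure_mono (closure_mono (image_subset_range _ _)))⟩]
  exact le_iInf fun k => (hσ k).le.trans (measure_mono subset_closure)

theorem MeasureTheory.AnalyticSet.exists_isCompact_subset_measure_pos [ProperSpace X]
    [MeasurableSpace X] [OpensMeasurableSpace X] (μ : Measure X) [IsFiniteMeasureOnCompacts μ]
    {s : Set X} (hs : AnalyticSet s) (hpos : 0 < μ s) : ∃ K ⊆ s, IsCompact K ∧ 0 < μ K := by
  obtain ⟨x₀, -⟩ := nonempty_of_measure_ne_zero hpos.ne'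
  obtain ⟨n, hn⟩ : ∃ n : ℕ, 0 < μ (s ∩ Metric.ball x₀ n) := by
    by_contra! h
    refine hpos.ne' (measure_mono_null ?_ (measure_iUnion_null fun n => nonpos_iff_eq_zero.1 (h n)))
    rw [← inter_iUnion, Metric.iUnion_ball_nat, inter_univ]
  obtain ⟨F, hF, hFs⟩ := (hs.inter_isOpen Metric.isOpen_ball).exists_continuous_range_eq
    (nonempty_of_measure_ne_zero hn.ne')
  have hball : closure (range F) ⊆ Metric.closedBall x₀ n :=
    hFs ▸ (closure_mono inter_subset_right).trans Metric.closure_ball_subset_closedBall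
  obtain ⟨c, hc0, hc⟩ := exists_between (hFs ▸ hn)
  obtain ⟨K, hK, hKF, hcK⟩ := exists_isClosed_subset_range_le_measure hF
    (ne_top_of_le_ne_top (isCompact_closedBall x₀ n).measure_lt_top.ne (measure_mono hball)) hc
  exact ⟨K, hKF.trans (hFs ▸ inter_subset_left),
    (isCompact_closedBall x₀ n).of_isClosed_subset hK (hKF.trans (subset_closure.trans hball)),
    hc0.trans_le hcK⟩

end Metric

theorem AddSubgroup.eq_top_of_analyticSet_of_measure_pos {G : Type*} [AddGroup G] [MetricSpace G]
    [ProperSpace G] [IsTopologicalAddGroup G] [ConnectedSpace G] [MeasurableSpace G]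
    [BorelSpace G] (μ : Measure G) [μ.IsAddHaarMeasure] [μ.InnerRegular] {H : AddSubgroup G}
    (hH : AnalyticSet (H : Set G)) (hpos : 0 < μ H) : H = ⊤ := by
  obtain ⟨K, hKH, hK, hKpos⟩ := hH.exists_isCompact_subset_measure_pos μ hpos
  have hsub : K - K ⊆ H := by
    rintro _ ⟨a, ha, b, hb, rfl⟩
    exact H.sub_mem (hKH ha) (hKH hb)
  have hopen : IsOpen (H : Set G) := H.isOpen_of_mem_nhds
    (mem_of_superset (Measure.sub_mem_nhds_zero_of_addHaar_pos μ K hK.measurableSet hKpos) hsub)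
  exact AddSubgroup.coe_eq_univ.1
    (IsClopen.eq_univ ⟨H.isClosed_of_isOpen hopen, hopen⟩ ⟨0, H.zero_mem⟩)

theorem stmt_3 :
    ¬ ∃ B : Set ℝ, MeasureTheory.AnalyticSet B ∧
      LinearIndependent ℚ ((↑) : B → ℝ) ∧ Submodule.span ℚ B = ⊤ := by
  rintro ⟨B, hB, hli, hspan⟩
  obtain ⟨b, hb⟩ : B.Nonempty := nonempty_iff_ne_empty.2 fun h => by
    simp [h] at hspan
  set p := Submodule.span ℚ (B \ {b})
  have hBp : Submodule.span ℚ {b} ⊔ p = ⊤ := by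
    rw [← Submodule.span_insert, insert_sdiff_singleton, insert_eq_of_mem hb, hspan]
  have hbp : b ∉ p := by
    have hli' : LinearIndepOn ℚ id (B \ {b}) := LinearIndepOn.mono hli sdiff_subset
    rw [hli'.notMem_span_iff_id, insert_sdiff_singleton, insert_eq_of_mem hb]
    exact ⟨hli, fun h => h.2 rfl⟩
  have hp : p.toAddSubgroup = ⊤ :=
    AddSubgroup.eq_top_of_analyticSet_of_measure_pos volume
      (hB.inter_isOpen isOpen_compl_singleton).span
      (measure_pos_of_iUnion_vadd_eq_univ volume (fun q : ℚ => q • b)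
        (Submodule.iUnion_smul_vadd_eq_univ hBp))
  exact hbp (p.mem_toAddSubgroup.1 (hp ▸ AddSubgroup.mem_top b))
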